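/- The top symbol of a stack can be read out by one saturated-sigmoid affine step: for every nonempty binary stack γ with top symbol b ∈ {0,1}, σ(10·enc(γ) − 2) = b (viewing b as the rational 0 or 1). -/

import Mathlib

/-- Digit encoding of a stack symbol: `d 0 = 1`, `d 1 = 3`. -/
def d (b : Bool) : ℚ := if b then 3 else 1

/-- Base-ten encoding of a binary stack (top symbol is the last element):
`enc (γ₁ ⋯ γ_N) = Σ_{i=1}^N d(γᵢ) · 10^{-(N-i+1)}`. -/
def enc (γ : List Bool) : ℚ := γ.foldl (fun acc b => acc / 10 + d b / 10) 0

/-- The saturated sigmoid. -/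
def sat (x : ℚ) : ℚ := if x < 0 then 0 else if x ≤ 1 then x else 1

lemma foldl_bounds (γ : List Bool) : ∀ a : ℚ, 0 ≤ a → a ≤ 1/3 →
    0 ≤ γ.foldl (fun acc b => acc / 10 + d b / 10) a ∧
    γ.foldl (fun acc b => acc / 10 + d b / 10) a ≤ 1/3 := by
  induction γ with
  | nil => intro a h1 h2; exact ⟨h1, h2⟩
  | cons b t ih =>
    intro a h1 h2
    apply ih
    · have : (0:ℚ) ≤ d b := by cases b <;> simp [d]
      positivity
    · have : d b ≤ 3 := by cases b <;> simp [d]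
      linarith

lemma enc_bounds (γ : List Bool) : 0 ≤ enc γ ∧ enc γ ≤ 1/3 :=
  foldl_bounds γ 0 le_rfl (by norm_num)

theorem readout_top (γ : List Bool) (b : Bool) (h : γ.getLast? = some b) :
    sat (10 * enc γ - 2) = (if b then 1 else 0) := by
  have hne : γ ≠ [] := by rintro rfl; simp at h
  have hb : γ.getLast hne = b := (List.getLast?_eq_getLast hne ▸ h : _) |> Option.some.inj
  have hγ : γ = γ.dropLast ++ [b] := by
    conv_lhs => rw [← List.dropLast_append_getLast hne, hb]
  obtain ⟨h0, h1⟩ := enc_bounds γ.dropLast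
  have henc : enc γ = enc γ.dropLast / 10 + d b / 10 := by
    rw [hγ]; simp [enc, List.foldl_append]
  rw [henc]
  cases b
  · have hlt : 10 * (enc γ.dropLast / 10 + d false / 10) - 2 < 0 := by
      simp [d]; linarith
    simp [sat, hlt]
  · have key : 10 * (enc γ.dropLast / 10 + d true / 10) - 2 = 1 + enc γ.dropLast := by
      simp [d]; ring
    rw [key]
    rcases eq_or_lt_of_le h0 with h0' | h0'
    · simp [sat, ← h0']
    · have : ¬ (1 + enc γ.dropLast < 0) := by linarith
      have : ¬ (1 + enc γ.dropLast ≤ 1) := by linarith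
      unfold sat
      rw [if_neg (by linarith), if_neg (by linarith)]
      simp
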